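/- For all x in (0, π/2) and all t > 0, (x/sin x)^{2t} + (x/sinh x)^t > 2 and (sinh x/x)^{2t} + (sin x/x)^t > 2; moreover 2·(sinh x/x)^t + (sin x/x)^t > 3 and 2·(x/sin x)^t + (x/sinh x)^t > 3. -/

import Mathlib

/-!
Both pairs of inequalities are instances of AM-GM: if `u, v > 0` and `u ^ 2 * v > 1`, then
`u ^ 2 + v ≥ 2 √(u ^ 2 v) > 2` and `u + u + v ≥ 3 ∛(u ^ 2 v) > 3`. Raising to the power `t > 0`
preserves `a ^ 2 * b > 1`, so it suffices to have `(x / sin x) ^ 2 (x / sinh x) > 1` and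
`(sinh x / x) ^ 2 (sin x / x) > 1`, i.e. `sin² x sinh x < x³ < sin x sinh² x`.

The right inequality follows from `sin x ≥ x - x³/6` and `sinh x ≥ x + x³/6`. For the left one,
with `y = x / 2` the double-angle formulas give
`sin² x sinh x = 8 sin² y cos² y sinh y cosh y < 8 y³ (cos y cosh y)²`, using `sin y ≤ y` and
`tanh y < y`, and `cos y cosh y < 1` for `0 < y ≤ 1` by Taylor bounds.
-/

open Real Finset

theorem Real.add_cube_div_six_le_sinh {x : ℝ} (hx : 0 ≤ x) : x + x ^ 3 / 6 ≤ sinh x := by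
  have h := sum_le_hasSum (range 2) (fun n _ => by positivity) (hasSum_sinh x)
  norm_num [sum_range_succ, Nat.factorial] at h
  linarith

theorem Real.sinh_lt_mul_cosh {x : ℝ} (hx : 0 < x) : sinh x < x * cosh x := by
  refine hasSum_lt (i := 1) (fun n => ?_) ?_ (hasSum_sinh x) ((hasSum_cosh x).mul_left x)
  · rw [← mul_div_assoc, ← pow_succ']
    gcongr
    omega
  · norm_num [Nat.factorial]
    rw [← mul_div_assoc, ← pow_succ']
    gcongr
    norm_num

theorem Real.cos_mul_cosh_lt_one {x : ℝ} (hx : 0 < x) (hx1 : x ≤ 1) : cos x * cosh x < 1 := by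
  set u := x ^ 2 / 2 with hu
  have hu0 : 0 < u := by positivity
  have hu1 : u ≤ 1 / 2 := by nlinarith
  have hcos : cos x ≤ 1 - u + 5 / 24 * u ^ 2 := by
    have h := (abs_le.1 (cos_bound (x := x) (by rwa [abs_of_pos hx]))).2
    rw [abs_of_pos hx] at h
    have hx4 : x ^ 4 = 4 * u ^ 2 := by rw [hu]; ring
    linarith
  have hexp := exp_bound' hu0.le (by linarith) (n := 3) (by norm_num)
  norm_num [sum_range_succ, Nat.factorial] at hexp
  calc cos x * cosh x ≤ (1 - u + 5 / 24 * u ^ 2) * (1 + u + u ^ 2 / 2 + u ^ 3 * 4 / 18) := by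
        gcongr
        · nlinarith
        · exact (cosh_le_exp_half_sq x).trans hexp
    _ < 1 := by nlinarith [pow_pos hu0 2, pow_pos hu0 3, pow_pos hu0 4, pow_pos hu0 5]

theorem sin_sq_mul_sinh_lt_cube {x : ℝ} (hx : 0 < x) (hx2 : x ≤ 2) :
    sin x ^ 2 * sinh x < x ^ 3 := by
  set y := x / 2
  have hy : 0 < y := by positivity
  have hxy : x = 2 * y := by ring
  have hcos : 0 < cos y := cos_pos_of_mem_Ioo ⟨by linarith [pi_pos], by linarith [pi_gt_three]⟩
  have hsinh : sinh y * cosh y < y * cosh y ^ 2 := by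
    nlinarith [sinh_lt_mul_cosh hy, cosh_pos y]
  have hcc : (cos y * cosh y) ^ 2 < 1 :=
    pow_lt_one₀ (by positivity) (cos_mul_cosh_lt_one hy (by linarith)) two_ne_zero
  calc sin x ^ 2 * sinh x = 8 * (sin y ^ 2 * cos y ^ 2) * (sinh y * cosh y) := by
        rw [hxy, sin_two_mul, sinh_two_mul]; ring
    _ ≤ 8 * (y ^ 2 * cos y ^ 2) * (sinh y * cosh y) := by
        gcongr 8 * (?_ * _) * _
        exact sin_sq_le_sq
    _ < 8 * (y ^ 2 * cos y ^ 2) * (y * cosh y ^ 2) := by gcongr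
    _ = x ^ 3 * (cos y * cosh y) ^ 2 := by rw [hxy]; ring
    _ < x ^ 3 := by nlinarith [pow_pos hx 3]

theorem cube_lt_sin_mul_sinh_sq {x : ℝ} (hx : 0 < x) (hx2 : x ^ 2 ≤ 3) :
    x ^ 3 < sin x * sinh x ^ 2 := by
  have hsin := sin_ge_sub_cube hx.le
  have hsinh := add_cube_div_six_le_sinh hx.le
  calc x ^ 3 < (x - x ^ 3 / 6) * (x + x ^ 3 / 6) ^ 2 := by
        nlinarith [pow_pos hx 5, pow_pos hx 7, pow_pos hx 9]
    _ ≤ sin x * sinh x ^ 2 := by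
        gcongr
        nlinarith

theorem two_lt_sq_add_of_one_lt_sq_mul {u v : ℝ} (h : 1 < u ^ 2 * v) : 2 < u ^ 2 + v := by
  have hv : 0 < v := pos_of_mul_pos_right (one_pos.trans h) (sq_nonneg u)
  nlinarith [sq_nonneg (u ^ 2 - v), sq_nonneg u]

theorem three_lt_two_mul_add_of_one_lt_sq_mul {u v : ℝ} (hu : 0 < u) (h : 1 < u ^ 2 * v) :
    3 < 2 * u + v := by
  nlinarith [mul_nonneg (sq_nonneg (u - 1)) (by linarith : (0:ℝ) ≤ 2 * u + 1), mul_pos hu hu]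

theorem one_lt_rpow_sq_mul_rpow {a b t : ℝ} (ha : 0 ≤ a) (hb : 0 ≤ b) (ht : 0 < t)
    (h : 1 < a ^ 2 * b) : 1 < (a ^ t) ^ 2 * b ^ t := by
  rw [rpow_pow_comm ha, ← mul_rpow (by positivity) hb]
  exact one_lt_rpow h ht

theorem two_lt_rpow_two_mul_add_rpow {a b t : ℝ} (ha : 0 ≤ a) (hb : 0 ≤ b) (ht : 0 < t)
    (h : 1 < a ^ 2 * b) : 2 < a ^ (2 * t) + b ^ t := by
  have hsq : a ^ (2 * t) = (a ^ t) ^ 2 := by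
    rw [mul_comm]; exact_mod_cast rpow_mul_natCast ha t 2
  rw [hsq]
  exact two_lt_sq_add_of_one_lt_sq_mul (one_lt_rpow_sq_mul_rpow ha hb ht h)

theorem three_lt_two_mul_rpow_add_rpow {a b t : ℝ} (ha : 0 < a) (hb : 0 ≤ b) (ht : 0 < t)
    (h : 1 < a ^ 2 * b) : 3 < 2 * a ^ t + b ^ t :=
  three_lt_two_mul_add_of_one_lt_sq_mul (rpow_pos_of_pos ha t)
    (one_lt_rpow_sq_mul_rpow ha.le hb ht h)

theorem stmt19 (x t : ℝ) (hx : 0 < x) (hx2 : x < π/2) (ht : 0 < t) :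
    (x/Real.sin x) ^ (2*t) + (x/Real.sinh x) ^ t > 2 ∧
    (Real.sinh x/x) ^ (2*t) + (Real.sin x/x) ^ t > 2 ∧
    2*(Real.sinh x/x) ^ t + (Real.sin x/x) ^ t > 3 ∧
    2*(x/Real.sin x) ^ t + (x/Real.sinh x) ^ t > 3 := by
  have hsin : 0 < sin x := sin_pos_of_pos_of_lt_pi hx (by linarith [pi_pos])
  have hsinh : 0 < sinh x := sinh_pos_iff.mpr hx
  have hA : 1 < (x / sin x) ^ 2 * (x / sinh x) := by
    rw [div_pow, div_mul_div_comm, ← pow_succ, one_lt_div (by positivity)]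
    exact sin_sq_mul_sinh_lt_cube hx (by linarith [pi_le_four])
  have hB : 1 < (sinh x / x) ^ 2 * (sin x / x) := by
    rw [div_pow, div_mul_div_comm, ← pow_succ, one_lt_div (by positivity), mul_comm]
    exact cube_lt_sin_mul_sinh_sq hx (by nlinarith [pi_lt_d2])
  exact ⟨two_lt_rpow_two_mul_add_rpow (by positivity) (by positivity) ht hA,
    two_lt_rpow_two_mul_add_rpow (by positivity) (by positivity) ht hB,
    three_lt_two_mul_rpow_add_rpow (by positivity) (by positivity) ht hB,
    three_lt_two_mul_rpow_add_rpow (by positivity) (by positivity) ht hA⟩
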